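/- Let A ⊂ Z^d be a finite set that is both connected and co-connected (its complement is connected). Then the union ∂•A ∪ ∂∘A of its internal and external vertex boundaries is connected in Z^d. -/
import Mathlib


/-- Vertices of the lattice `ℤ^d`. -/
abbrev Vtx (d : ℕ) := Fin d → ℤ

/-- Nearest-neighbor adjacency in `ℤ^d`. -/
def latAdj {d : ℕ} (u v : Vtx d) : Prop := (∑ i, (u i - v i).natAbs) = 1

/-- Adjacency within a set `U`: both endpoints lie in `U` and they are lattice-adjacent. -/
def within {d : ℕ} (U : Set (Vtx d)) (x y : Vtx d) : Prop :=
  latAdj x y ∧ x ∈ U ∧ y ∈ U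

/-- A set of vertices is connected if any two of its points are joined by a
nearest-neighbor path inside the set. -/
def SetConn {d : ℕ} (U : Set (Vtx d)) : Prop :=
  ∀ x ∈ U, ∀ y ∈ U, Relation.ReflTransGen (within U) x y

/-- Internal vertex boundary of `A`. -/
def intB {d : ℕ} (A : Set (Vtx d)) : Set (Vtx d) :=
  {x | x ∈ A ∧ ∃ u, u ∉ A ∧ latAdj x u}

/-- External vertex boundary of `A`. -/
def extB {d : ℕ} (A : Set (Vtx d)) : Set (Vtx d) :=
  {x | x ∉ A ∧ ∃ u ∈ A, latAdj x u}

/-! ### Auxiliary development -/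

open Relation Finset

section Aux

variable {d : ℕ}

/-- The `j`-th unit vector. -/
def unitv (j : Fin d) : Vtx d := fun m => if m = j then 1 else 0

lemma latAdj_symm {x y : Vtx d} (h : latAdj x y) : latAdj y x := by
  unfold latAdj at *
  rw [← h]
  exact Finset.sum_congr rfl fun i _ => by omega

lemma latAdj_pos {x y : Vtx d} (h : latAdj x y) : 0 < d := by
  rcases Nat.eq_zero_or_pos d with hd | hd
  · subst hd; simp [latAdj] at h
  · exact hd

lemma add_unitv_apply_self (p : Vtx d) (j : Fin d) : (p + unitv j) j = p j + 1 := by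
  simp [unitv]

lemma add_unitv_apply_ne (p : Vtx d) {j m : Fin d} (h : m ≠ j) : (p + unitv j) m = p m := by
  simp [unitv, h]

lemma latAdj_add_unitv (p : Vtx d) (j : Fin d) : latAdj p (p + unitv j) := by
  unfold latAdj
  have h : ∀ m, (p m - (p + unitv j) m).natAbs = if m = j then 1 else 0 := by
    intro m
    by_cases hm : m = j
    · subst hm; rw [add_unitv_apply_self, if_pos rfl]; omega
    · rw [add_unitv_apply_ne _ hm, if_neg hm]; omega
  simp only [h]
  simp

lemma latAdj_decomp {x y : Vtx d} (h : latAdj x y) :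
    ∃ j : Fin d, y = x + unitv j ∨ x = y + unitv j := by
  unfold latAdj at h
  have hne : (∑ i, (x i - y i).natAbs) ≠ 0 := by rw [h]; norm_num
  obtain ⟨j, _, hj⟩ := Finset.exists_ne_zero_of_sum_ne_zero hne
  have hle : (x j - y j).natAbs ≤ 1 := h ▸ Finset.single_le_sum
    (f := fun i => (x i - y i).natAbs) (fun i _ => Nat.zero_le _) (Finset.mem_univ j)
  have h1 : (x j - y j).natAbs = 1 := le_antisymm hle (Nat.one_le_iff_ne_zero.2 hj)
  have hrest : ∑ m ∈ Finset.univ.erase j, (x m - y m).natAbs = 0 := by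
    have h2 : (x j - y j).natAbs + ∑ m ∈ Finset.univ.erase j, (x m - y m).natAbs = 1 := by
      rw [Finset.add_sum_erase Finset.univ (fun i => (x i - y i).natAbs) (Finset.mem_univ j)]
      exact h
    omega
  have h0 : ∀ m, m ≠ j → x m = y m := by
    intro m hm
    have := (Finset.sum_eq_zero_iff.mp hrest) m (Finset.mem_erase.2 ⟨hm, Finset.mem_univ m⟩)
    have := Int.natAbs_eq_zero.mp this
    linarith [sub_eq_zero.mp this]
  rcases Int.natAbs_eq_iff.mp h1 with hv | hv
  · -- x j - y j = 1, so x = y + unitv j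
    refine ⟨j, Or.inr ?_⟩
    funext m
    by_cases hm : m = j
    · subst hm; rw [add_unitv_apply_self]; omega
    · rw [add_unitv_apply_ne _ hm, h0 m hm]
  · refine ⟨j, Or.inl ?_⟩
    funext m
    by_cases hm : m = j
    · subst hm; rw [add_unitv_apply_self]; omega
    · rw [add_unitv_apply_ne _ hm, h0 m hm]

/-- Oriented boundary edge: tail in `A`, head outside. -/
def bedge (A : Set (Vtx d)) (e : Vtx d × Vtx d) : Prop :=
  e.1 ∈ A ∧ e.2 ∉ A ∧ latAdj e.1 e.2

/-- Two boundary edges are elementarily related if they share a tail, share a head,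
or are parallel sides of a unit square. -/
def erel (A : Set (Vtx d)) (e f : Vtx d × Vtx d) : Prop :=
  bedge A e ∧ bedge A f ∧
    (e.1 = f.1 ∨ e.2 = f.2 ∨ (latAdj e.1 f.1 ∧ e.1 - f.1 = e.2 - f.2))

lemma erel_symm {A : Set (Vtx d)} {e f : Vtx d × Vtx d} (h : erel A e f) : erel A f e := by
  obtain ⟨h1, h2, h3⟩ := h
  refine ⟨h2, h1, ?_⟩
  rcases h3 with h | h | ⟨ha, hv⟩
  · exact Or.inl h.symm
  · exact Or.inr (Or.inl h.symm)
  · exact Or.inr (Or.inr ⟨latAdj_symm ha, by rw [← neg_sub, hv, neg_sub]⟩)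

open Classical in
/-- `GF(2)` indicator that the (unordered) edge `{x, y}` is in the `erel`-component of `e₀`. -/
noncomputable def tI (A : Set (Vtx d)) (e₀ : Vtx d × Vtx d) (x y : Vtx d) : ZMod 2 :=
  if (Relation.ReflTransGen (erel A) e₀ (x, y) ∨ Relation.ReflTransGen (erel A) e₀ (y, x))
  then 1 else 0

lemma tI_symm (A : Set (Vtx d)) (e₀ : Vtx d × Vtx d) (x y : Vtx d) :
    tI A e₀ x y = tI A e₀ y x := by
  unfold tI
  congr 1
  exact propext or_comm

lemma reach_bedge {A : Set (Vtx d)} {e₀ f : Vtx d × Vtx d} (hbe₀ : bedge A e₀)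
    (h : Relation.ReflTransGen (erel A) e₀ f) : bedge A f := by
  induction h with
  | refl => exact hbe₀
  | tail _ h2 _ => exact h2.2.1

lemma tI_zero {A : Set (Vtx d)} {e₀ : Vtx d × Vtx d} (hbe₀ : bedge A e₀)
    {x y : Vtx d} (hxy : x ∈ A ↔ y ∈ A) : tI A e₀ x y = 0 := by
  unfold tI
  rw [if_neg]
  rintro (h | h) <;> have hb := reach_bedge hbe₀ h
  · exact hb.2.1 (hxy.mp hb.1)
  · exact hb.2.1 (hxy.mpr hb.1)

lemma tI_eq_of_erel {A : Set (Vtx d)} {e₀ : Vtx d × Vtx d} (hbe₀ : bedge A e₀)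
    {x y x' y' : Vtx d} (h : erel A (x, y) (x', y')) : tI A e₀ x y = tI A e₀ x' y' := by
  unfold tI
  congr 1
  apply propext
  constructor
  · rintro (h1 | h1)
    · exact Or.inl (h1.tail h)
    · exact absurd (reach_bedge hbe₀ h1).1 h.1.2.1
  · rintro (h1 | h1)
    · exact Or.inl (h1.tail (erel_symm h))
    · exact absurd (reach_bedge hbe₀ h1).1 h.2.1.2.1

open Classical in
/-- Parity of the number of `tI`-edges crossed by the ray from `v` in direction `i₀`
(truncated past the bound `M`). -/
noncomputable def gfun (A : Set (Vtx d)) (e₀ : Vtx d × Vtx d) (i₀ : Fin d) (M : ℤ)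
    (v : Vtx d) : ZMod 2 :=
  ∑ k ∈ Finset.range (M - v i₀).toNat,
    tI A e₀ (v + (k : ℤ) • unitv i₀) (v + ((k : ℤ) + 1) • unitv i₀)

lemma smul_unitv_apply_self (k : ℤ) (i₀ : Fin d) (v : Vtx d) :
    (v + k • unitv i₀) i₀ = v i₀ + k := by
  simp [unitv]

variable {A : Set (Vtx d)} {e₀ : Vtx d × Vtx d} {i₀ : Fin d} {M : ℤ}

lemma gfun_pad (hbe₀ : bedge A e₀) (hM : ∀ a ∈ A, a i₀ < M) (v : Vtx d) {N : ℕ}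
    (hN : (M - v i₀).toNat ≤ N) :
    ∑ k ∈ Finset.range N,
      tI A e₀ (v + (k : ℤ) • unitv i₀) (v + ((k : ℤ) + 1) • unitv i₀) =
    gfun A e₀ i₀ M v := by
  unfold gfun
  refine (Finset.sum_subset (Finset.range_subset_range.2 hN) ?_).symm
  intro k _ hk
  rw [Finset.mem_range, not_lt] at hk
  have hk' : M - v i₀ ≤ (k : ℤ) := by
    have := Int.toNat_le.mp hk
    omega
  apply tI_zero hbe₀
  constructor
  · intro h
    exact absurd (hM _ h) (by rw [smul_unitv_apply_self]; omega)
  · intro h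
    exact absurd (hM _ h) (by rw [smul_unitv_apply_self]; omega)

lemma gfun_step0 (hbe₀ : bedge A e₀) (hM : ∀ a ∈ A, a i₀ < M) (u : Vtx d) :
    gfun A e₀ i₀ M u + gfun A e₀ i₀ M (u + unitv i₀) = tI A e₀ u (u + unitv i₀) := by
  set v := u + unitv i₀ with hv
  have hvc : v i₀ = u i₀ + 1 := add_unitv_apply_self u i₀
  have hpad : (M - u i₀).toNat ≤ (M - v i₀).toNat + 1 := by rw [hvc]; omega
  rw [← gfun_pad hbe₀ hM u hpad, Finset.sum_range_succ']
  have hray : ∀ k : ℕ, u + ((k : ℤ) + 1) • unitv i₀ = v + (k : ℤ) • unitv i₀ := by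
    intro k
    rw [hv, add_smul, one_smul]
    abel
  have hcongr : ∀ k ∈ Finset.range ((M - v i₀).toNat),
      tI A e₀ (u + ((k + 1 : ℕ) : ℤ) • unitv i₀) (u + (((k + 1 : ℕ) : ℤ) + 1) • unitv i₀)
        = tI A e₀ (v + (k : ℤ) • unitv i₀) (v + ((k : ℤ) + 1) • unitv i₀) := by
    intro k _
    have e1 : u + ((k + 1 : ℕ) : ℤ) • unitv i₀ = v + (k : ℤ) • unitv i₀ := by
      push_cast
      exact hray k
    have e2 : u + (((k + 1 : ℕ) : ℤ) + 1) • unitv i₀ = v + ((k : ℤ) + 1) • unitv i₀ := by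
      push_cast
      rw [hv, add_smul, add_smul, one_smul]
      abel
    rw [e1, e2]
  rw [Finset.sum_congr rfl hcongr]
  have e0 : u + (0 : ℤ) • unitv i₀ = u := by simp
  have e0' : u + ((0 : ℤ) + 1) • unitv i₀ = v := by rw [hv]; simp
  rw [show ((0 : ℕ) : ℤ) = (0 : ℤ) from rfl, e0, e0']
  unfold gfun
  rw [add_assoc, add_comm (tI A e₀ u v), ← add_assoc]
  rw [CharTwo.add_self_eq_zero, zero_add]

lemma tI_in (hbe₀ : bedge A e₀) {x y : Vtx d} (hx : x ∈ A) (hy : y ∈ A) :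
    tI A e₀ x y = 0 := tI_zero hbe₀ (iff_of_true hx hy)

lemma tI_out (hbe₀ : bedge A e₀) {x y : Vtx d} (hx : x ∉ A) (hy : y ∉ A) :
    tI A e₀ x y = 0 := tI_zero hbe₀ (iff_of_false hx hy)

/-- Abstract square relation: the `tI`-sum over the four sides of a unit square vanishes. -/
lemma square' (hbe₀ : bedge A e₀) {a b c e : Vtx d}
    (hab : latAdj a b) (hcd : latAdj c e) (hac : latAdj a c) (hbd : latAdj b e)
    (hvert : a - b = c - e) (hhoriz : a - c = b - e) :
    tI A e₀ a b + tI A e₀ c e = tI A e₀ a c + tI A e₀ b e := by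
  by_cases ha : a ∈ A <;> by_cases hb : b ∈ A <;> by_cases hc : c ∈ A <;> by_cases hd : e ∈ A
  · rw [tI_in hbe₀ ha hb, tI_in hbe₀ hc hd, tI_in hbe₀ ha hc, tI_in hbe₀ hb hd]
  · -- 1110 : crossings (c,e), (b,e)
    rw [tI_eq_of_erel hbe₀ ⟨⟨hc, hd, hcd⟩, ⟨hb, hd, hbd⟩, Or.inr (Or.inl rfl)⟩,
      tI_in hbe₀ ha hb, tI_in hbe₀ ha hc]
  · -- 1101 : crossings (e,c), (a,c)
    rw [tI_symm A e₀ c e,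
      tI_eq_of_erel hbe₀ ⟨⟨hd, hc, latAdj_symm hcd⟩, ⟨ha, hc, hac⟩, Or.inr (Or.inl rfl)⟩,
      tI_in hbe₀ ha hb, tI_in hbe₀ hb hd, zero_add, add_zero]
  · -- 1100 : crossings (a,c), (b,e) parallel
    rw [tI_eq_of_erel hbe₀ ⟨⟨ha, hc, hac⟩, ⟨hb, hd, hbd⟩, Or.inr (Or.inr ⟨hab, hvert⟩)⟩,
      CharTwo.add_self_eq_zero, tI_in hbe₀ ha hb, tI_out hbe₀ hc hd, zero_add]
  · -- 1011 : crossings (a,b), (e,b)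
    rw [tI_symm A e₀ b e,
      ← tI_eq_of_erel hbe₀ ⟨⟨ha, hb, hab⟩, ⟨hd, hb, latAdj_symm hbd⟩, Or.inr (Or.inl rfl)⟩,
      tI_in hbe₀ hc hd, tI_in hbe₀ ha hc, add_zero, zero_add]
  · -- 1010 : crossings (a,b), (c,e) parallel
    rw [tI_eq_of_erel hbe₀ ⟨⟨ha, hb, hab⟩, ⟨hc, hd, hcd⟩, Or.inr (Or.inr ⟨hac, hhoriz⟩)⟩,
      CharTwo.add_self_eq_zero, tI_in hbe₀ ha hc, tI_out hbe₀ hb hd, add_zero]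
  · -- 1001 : four crossings
    rw [tI_eq_of_erel hbe₀ ⟨⟨ha, hb, hab⟩, ⟨ha, hc, hac⟩, Or.inl rfl⟩,
      tI_symm A e₀ c e,
      tI_eq_of_erel hbe₀ ⟨⟨hd, hc, latAdj_symm hcd⟩, ⟨hd, hb, latAdj_symm hbd⟩, Or.inl rfl⟩,
      tI_symm A e₀ e b]
  · -- 1000 : crossings (a,b), (a,c)
    rw [tI_eq_of_erel hbe₀ ⟨⟨ha, hb, hab⟩, ⟨ha, hc, hac⟩, Or.inl rfl⟩,
      tI_out hbe₀ hc hd, tI_out hbe₀ hb hd]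
  · -- 0111 : crossings (b,a), (c,a)
    rw [tI_symm A e₀ a b,
      tI_eq_of_erel hbe₀ ⟨⟨hb, ha, latAdj_symm hab⟩, ⟨hc, ha, latAdj_symm hac⟩,
        Or.inr (Or.inl rfl)⟩,
      tI_symm A e₀ a c, tI_in hbe₀ hc hd, tI_in hbe₀ hb hd]
  · -- 0110 : four crossings
    rw [tI_symm A e₀ a b,
      tI_eq_of_erel hbe₀ ⟨⟨hb, ha, latAdj_symm hab⟩, ⟨hb, hd, hbd⟩, Or.inl rfl⟩,
      tI_symm A e₀ a c,
      tI_eq_of_erel hbe₀ ⟨⟨hc, ha, latAdj_symm hac⟩, ⟨hc, hd, hcd⟩, Or.inl rfl⟩,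
      add_comm]
  · -- 0101 : crossings (b,a), (e,c) parallel
    rw [tI_symm A e₀ a b,
      tI_eq_of_erel hbe₀ ⟨⟨hb, ha, latAdj_symm hab⟩, ⟨hd, hc, latAdj_symm hcd⟩,
        Or.inr (Or.inr ⟨hbd, hhoriz.symm⟩)⟩,
      ← tI_symm A e₀ c e, CharTwo.add_self_eq_zero,
      tI_out hbe₀ ha hc, tI_in hbe₀ hb hd, add_zero]
  · -- 0100 : crossings (b,a), (b,e)
    rw [tI_symm A e₀ a b,
      tI_eq_of_erel hbe₀ ⟨⟨hb, ha, latAdj_symm hab⟩, ⟨hb, hd, hbd⟩, Or.inl rfl⟩,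
      tI_out hbe₀ hc hd, tI_out hbe₀ ha hc, add_zero, zero_add]
  · -- 0011 : crossings (c,a), (e,b) parallel
    rw [tI_symm A e₀ a c,
      tI_eq_of_erel hbe₀ ⟨⟨hc, ha, latAdj_symm hac⟩, ⟨hd, hb, latAdj_symm hbd⟩,
        Or.inr (Or.inr ⟨hcd, hvert.symm⟩)⟩,
      ← tI_symm A e₀ b e, CharTwo.add_self_eq_zero,
      tI_out hbe₀ ha hb, tI_in hbe₀ hc hd, zero_add]
  · -- 0010 : crossings (c,a), (c,e)
    rw [tI_symm A e₀ a c,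
      tI_eq_of_erel hbe₀ ⟨⟨hc, ha, latAdj_symm hac⟩, ⟨hc, hd, hcd⟩, Or.inl rfl⟩,
      tI_out hbe₀ ha hb, tI_out hbe₀ hb hd, zero_add, add_zero]
  · -- 0001 : crossings (e,c), (e,b)
    rw [tI_symm A e₀ c e,
      tI_eq_of_erel hbe₀ ⟨⟨hd, hc, latAdj_symm hcd⟩, ⟨hd, hb, latAdj_symm hbd⟩, Or.inl rfl⟩,
      tI_symm A e₀ e b, tI_out hbe₀ ha hb, tI_out hbe₀ ha hc]
  · rw [tI_out hbe₀ ha hb, tI_out hbe₀ hc hd, tI_out hbe₀ ha hc, tI_out hbe₀ hb hd]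

/-- The square relation at a concrete base point. -/
lemma square (hbe₀ : bedge A e₀) (j : Fin d) (p : Vtx d) :
    tI A e₀ p (p + unitv i₀) + tI A e₀ (p + unitv j) (p + unitv j + unitv i₀)
      = tI A e₀ p (p + unitv j) + tI A e₀ (p + unitv i₀) (p + unitv j + unitv i₀) := by
  have hbe : p + unitv j + unitv i₀ = (p + unitv i₀) + unitv j := by abel
  exact square' hbe₀ (latAdj_add_unitv p i₀) (latAdj_add_unitv _ i₀) (latAdj_add_unitv p j)
    (hbe ▸ latAdj_add_unitv (p + unitv i₀) j) (by abel) (by abel)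

lemma gfun_stepj (hbe₀ : bedge A e₀) (hM : ∀ a ∈ A, a i₀ < M) (u : Vtx d) {j : Fin d}
    (hj : j ≠ i₀) :
    gfun A e₀ i₀ M u + gfun A e₀ i₀ M (u + unitv j) = tI A e₀ u (u + unitv j) := by
  set w := u + unitv j with hw
  have hwc : w i₀ = u i₀ := add_unitv_apply_ne u (Ne.symm hj)
  set N := max (M - u i₀).toNat (M - w i₀).toNat with hN
  rw [← gfun_pad hbe₀ hM u (le_max_left _ _), ← gfun_pad hbe₀ hM w (le_max_right _ _),
    ← Finset.sum_add_distrib]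
  have hsq : ∀ k ∈ Finset.range N,
      (tI A e₀ (u + (k : ℤ) • unitv i₀) (u + ((k : ℤ) + 1) • unitv i₀) +
        tI A e₀ (w + (k : ℤ) • unitv i₀) (w + ((k : ℤ) + 1) • unitv i₀))
      = tI A e₀ (u + ((k + 1 : ℕ) : ℤ) • unitv i₀) (w + ((k + 1 : ℕ) : ℤ) • unitv i₀)
        - tI A e₀ (u + (k : ℤ) • unitv i₀) (w + (k : ℤ) • unitv i₀) := by
    intro k _
    set p := u + (k : ℤ) • unitv i₀ with hp
    have e1 : u + ((k : ℤ) + 1) • unitv i₀ = p + unitv i₀ := by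
      rw [hp, add_smul, one_smul]; abel
    have e2 : w + (k : ℤ) • unitv i₀ = p + unitv j := by rw [hp, hw]; abel
    have e3 : w + ((k : ℤ) + 1) • unitv i₀ = p + unitv j + unitv i₀ := by
      rw [hp, hw, add_smul, one_smul]; abel
    have e4 : u + ((k + 1 : ℕ) : ℤ) • unitv i₀ = p + unitv i₀ := by
      push_cast; rw [hp, add_smul, one_smul]; abel
    have e5 : w + ((k + 1 : ℕ) : ℤ) • unitv i₀ = p + unitv j + unitv i₀ := by
      push_cast; rw [hp, hw, add_smul, one_smul]; abel
    rw [e1, e2, e3, e4, e5, square hbe₀ j p, CharTwo.sub_eq_add, add_comm]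
  rw [Finset.sum_congr rfl hsq,
    Finset.sum_range_sub (fun k => tI A e₀ (u + (k : ℤ) • unitv i₀) (w + (k : ℤ) • unitv i₀))]
  have hzero : tI A e₀ (u + (N : ℤ) • unitv i₀) (w + (N : ℤ) • unitv i₀) = 0 := by
    have h1 : M - u i₀ ≤ (N : ℤ) := by
      have := le_max_left (M - u i₀).toNat (M - w i₀).toNat
      omega
    apply tI_zero hbe₀
    constructor
    · intro h; exact absurd (hM _ h) (by rw [smul_unitv_apply_self]; omega)
    · intro h; exact absurd (hM _ h) (by rw [smul_unitv_apply_self, hwc]; omega)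
  rw [hzero]
  have hzsmul : u + ((0 : ℕ) : ℤ) • unitv i₀ = u := by simp
  have hzsmul' : w + ((0 : ℕ) : ℤ) • unitv i₀ = w := by simp
  rw [hzsmul, hzsmul', zero_sub, CharTwo.neg_eq]

lemma gfun_step (hbe₀ : bedge A e₀) (hM : ∀ a ∈ A, a i₀ < M) {u v : Vtx d}
    (h : latAdj u v) :
    gfun A e₀ i₀ M u + gfun A e₀ i₀ M v = tI A e₀ u v := by
  have key : ∀ (p : Vtx d) (j : Fin d),
      gfun A e₀ i₀ M p + gfun A e₀ i₀ M (p + unitv j) = tI A e₀ p (p + unitv j) := by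
    intro p j
    by_cases hji : j = i₀
    · subst hji; exact gfun_step0 hbe₀ hM p
    · exact gfun_stepj hbe₀ hM p hji
  obtain ⟨j, hj | hj⟩ := latAdj_decomp h
  · rw [hj]; exact key u j
  · rw [hj, tI_symm, add_comm]; exact key v j

/-- Helper: in `ZMod 2`, `x + y = 0` implies `x = y`. -/
lemma zmod2_eq_of_add_eq_zero {x y : ZMod 2} (h : x + y = 0) : x = y := by
  have h' : x - y = 0 := by rw [CharTwo.sub_eq_add]; exact h
  exact sub_eq_zero.mp h'

/-- Main lemma: any boundary edge is `erel`-reachable from any other. -/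
lemma bedge_reach (hfin : A.Finite) (hconn : SetConn A) (hco : SetConn Aᶜ)
    (i₀ : Fin d) (hbe₀ : bedge A e₀) {f : Vtx d × Vtx d} (hf : bedge A f) :
    Relation.ReflTransGen (erel A) e₀ f := by
  obtain ⟨M, hM⟩ : ∃ M : ℤ, ∀ a ∈ A, a i₀ < M := by
    obtain ⟨B, hB⟩ := (hfin.image (fun a => a i₀)).bddAbove
    exact ⟨B + 1, fun a ha =>
      lt_of_le_of_lt (hB (Set.mem_image_of_mem _ ha)) (lt_add_one B)⟩
  have hstep := fun {u v : Vtx d} (h : latAdj u v) => gfun_step hbe₀ hM h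
  -- `gfun` is constant along paths within `A`
  have gA : ∀ p q : Vtx d, Relation.ReflTransGen (within A) p q →
      gfun A e₀ i₀ M p = gfun A e₀ i₀ M q := by
    intro p q h
    induction h with
    | refl => rfl
    | tail _ h2 ih =>
      refine ih.trans (zmod2_eq_of_add_eq_zero ?_)
      rw [hstep h2.1]
      exact tI_in hbe₀ h2.2.1 h2.2.2
  -- `gfun` is constant along paths within `Aᶜ`
  have gC' : ∀ p q : Vtx d, Relation.ReflTransGen (within Aᶜ) p q →
      gfun A e₀ i₀ M p = gfun A e₀ i₀ M q := by
    intro p q h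
    induction h with
    | refl => rfl
    | tail _ h2 ih =>
      refine ih.trans (zmod2_eq_of_add_eq_zero ?_)
      rw [hstep h2.1]
      exact tI_out hbe₀ h2.2.1 h2.2.2
  -- the far point
  have hwmem : (fun _ => M : Vtx d) ∈ Aᶜ := fun h => absurd (hM _ h) (lt_irrefl M)
  have hwzero : gfun A e₀ i₀ M (fun _ => M) = 0 := by
    unfold gfun
    rw [show (M - (fun _ => M : Vtx d) i₀).toNat = 0 by simp]
    simp
  have gC : ∀ c, c ∉ A → gfun A e₀ i₀ M c = 0 := fun c hc =>
    (gC' c _ (hco c hc _ hwmem)).trans hwzero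
  -- value on `A` is 1
  have h1 : gfun A e₀ i₀ M e₀.1 = 1 := by
    have h2 := hstep hbe₀.2.2
    rw [gC e₀.2 hbe₀.2.1, add_zero] at h2
    rw [h2]
    unfold tI
    rw [if_pos (Or.inl (by rw [Prod.mk.eta]))]
  have hf1 : gfun A e₀ i₀ M f.1 = 1 :=
    (gA f.1 e₀.1 (hconn f.1 hf.1 e₀.1 hbe₀.1)).trans h1
  have hf2 : gfun A e₀ i₀ M f.2 = 0 := gC f.2 hf.2.1
  have h3 : tI A e₀ f.1 f.2 = 1 := by
    rw [← hstep hf.2.2, hf1, hf2, add_zero]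
  have hTm : Relation.ReflTransGen (erel A) e₀ (f.1, f.2) ∨
      Relation.ReflTransGen (erel A) e₀ (f.2, f.1) := by
    by_contra hcon
    unfold tI at h3
    rw [if_neg hcon] at h3
    exact (by decide : (0 : ZMod 2) ≠ 1) h3
  rcases hTm with h | h
  · rwa [Prod.mk.eta] at h
  · exact absurd (reach_bedge hbe₀ h).1 hf.2.1

lemma bedge_fst_mem {e : Vtx d × Vtx d} (h : bedge A e) : e.1 ∈ intB A :=
  ⟨h.1, e.2, h.2.1, h.2.2⟩

lemma bedge_snd_mem {e : Vtx d × Vtx d} (h : bedge A e) : e.2 ∈ extB A :=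
  ⟨h.2.1, e.1, h.1, latAdj_symm h.2.2⟩

lemma bedge_within {e : Vtx d × Vtx d} (h : bedge A e) :
    within (intB A ∪ extB A) e.1 e.2 :=
  ⟨h.2.2, Or.inl (bedge_fst_mem h), Or.inr (bedge_snd_mem h)⟩

/-- A chain of elementary relations between boundary edges yields a path in the
boundary between the tails. -/
lemma reach_path {e f : Vtx d × Vtx d} (h : Relation.ReflTransGen (erel A) e f) :
    Relation.ReflTransGen (within (intB A ∪ extB A)) e.1 f.1 := by
  induction h with
  | refl => exact Relation.ReflTransGen.refl
  | tail _ h2 ih =>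
    refine ih.trans ?_
    obtain ⟨hb1, hb2, h3⟩ := h2
    rcases h3 with h3 | h3 | ⟨h3, _⟩
    · rw [h3]
    · refine Relation.ReflTransGen.head (bedge_within hb1) ?_
      rw [h3]
      refine Relation.ReflTransGen.single ?_
      exact ⟨latAdj_symm hb2.2.2, Or.inr (bedge_snd_mem hb2), Or.inl (bedge_fst_mem hb2)⟩
    · exact Relation.ReflTransGen.single
        ⟨h3, Or.inl (bedge_fst_mem hb1), Or.inl (bedge_fst_mem hb2)⟩

end Aux

/-- if `A ⊆ ℤ^d` is finite, connected and co-connected, then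
`∂•A ∪ ∂∘A` is connected. -/
theorem boundary_connected {d : ℕ} (A : Set (Vtx d)) (hfin : A.Finite)
    (hconn : SetConn A) (hco : SetConn Aᶜ) :
    SetConn (intB A ∪ extB A) := by
  intro x hx y hy
  obtain ⟨ex, hbex, hex⟩ : ∃ e : Vtx d × Vtx d, bedge A e ∧ (x = e.1 ∨ x = e.2) := by
    rcases hx with ⟨hxA, u, hu, hadj⟩ | ⟨hxn, u, huA, hadj⟩
    · exact ⟨(x, u), ⟨hxA, hu, hadj⟩, Or.inl rfl⟩
    · exact ⟨(u, x), ⟨huA, hxn, latAdj_symm hadj⟩, Or.inr rfl⟩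
  obtain ⟨ey, hbey, hey⟩ : ∃ e : Vtx d × Vtx d, bedge A e ∧ (y = e.1 ∨ y = e.2) := by
    rcases hy with ⟨hyA, u, hu, hadj⟩ | ⟨hyn, u, huA, hadj⟩
    · exact ⟨(y, u), ⟨hyA, hu, hadj⟩, Or.inl rfl⟩
    · exact ⟨(u, y), ⟨huA, hyn, latAdj_symm hadj⟩, Or.inr rfl⟩
  have hd : 0 < d := latAdj_pos hbex.2.2
  have hreach := bedge_reach hfin hconn hco ⟨0, hd⟩ hbex hbey
  have hpath := reach_path hreach
  have px : Relation.ReflTransGen (within (intB A ∪ extB A)) x ex.1 := by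
    rcases hex with h | h
    · rw [h]
    · rw [h]
      exact Relation.ReflTransGen.single
        ⟨latAdj_symm hbex.2.2, Or.inr (bedge_snd_mem hbex), Or.inl (bedge_fst_mem hbex)⟩
  have py : Relation.ReflTransGen (within (intB A ∪ extB A)) ey.1 y := by
    rcases hey with h | h
    · rw [h]
    · rw [h]
      exact Relation.ReflTransGen.single (bedge_within hbey)
  exact (px.trans hpath).trans py
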